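/- arXiv:math/0409289 — 7 statements merged into one kernel-verified Lean document; each statement's English description precedes it below -/
import Mathlib

section
/- Let ABC be an equilateral triangle in the Euclidean plane and M any point of the plane. Then the distances d(M,A), d(M,B), d(M,C) satisfy all three (non-strict) triangle inequalities: d(M,A) + d(M,B) ≥ d(M,C), d(M,B) + d(M,C) ≥ d(M,A), and d(M,C) + d(M,A) ≥ d(M,B); i.e., the segments MA, MB, MC are the sides of a (possibly degenerate) triangle. -/
/-- Möbius–Pompeïu theorem: for an equilateral triangle `ABC` in the Euclidean
plane and any point `M`, the distances `MA`, `MB`, `MC` satisfy all three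
(non-strict) triangle inequalities. -/
theorem mobius_pompeiu (A B C M : EuclideanSpace ℝ (Fin 2))
    (h1 : dist A B = dist B C) (h2 : dist B C = dist C A) (h3 : 0 < dist A B) :
    dist M A + dist M B ≥ dist M C ∧
    dist M B + dist M C ≥ dist M A ∧
    dist M C + dist M A ≥ dist M B := by
  have P1 := EuclideanGeometry.mul_dist_le_mul_dist_add_mul_dist
    (V := EuclideanSpace ℝ (Fin 2)) A M B C
  have P2 := EuclideanGeometry.mul_dist_le_mul_dist_add_mul_dist
    (V := EuclideanSpace ℝ (Fin 2)) B M C A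
  have P3 := EuclideanGeometry.mul_dist_le_mul_dist_add_mul_dist
    (V := EuclideanSpace ℝ (Fin 2)) C M A B
  simp only [dist_comm A M, dist_comm B M, dist_comm C M, dist_comm B A,
    dist_comm C B, dist_comm A C] at P1 P2 P3
  rw [← h1, ← h1.trans h2] at P1 P2 P3
  constructor
  · nlinarith [dist_nonneg (x := M) (y := C)]
  constructor
  · nlinarith [dist_nonneg (x := M) (y := A)]
  · nlinarith [dist_nonneg (x := M) (y := B)]
end

section
/- In a Ptolemaic metric space (X,d), there exists a point M ∈ X with d2 + d3 − d1 ≤ 0 if and only if b ≥ a or c ≥ a. -/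
/-- In a Ptolemaic metric space, a point `M` with `d2 + d3 − d1 ≤ 0` exists
iff `b ≥ a` or `c ≥ a`, where `a = d(B,C)`, `b = d(C,A)`, `c = d(A,B)`. -/
theorem exists_point_iff {X : Type*} [MetricSpace X]
    (hPt : ∀ x1 x2 x3 x4 : X,
      dist x1 x2 * dist x3 x4 ≤ dist x2 x4 * dist x1 x3 + dist x1 x4 * dist x2 x3)
    (A B C : X) :
    (∃ M : X, dist M B + dist M C - dist M A ≤ 0) ↔
      dist C A ≥ dist B C ∨ dist A B ≥ dist B C := by
  constructor
  · rintro ⟨M, hM⟩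
    by_contra h
    push_neg at h
    obtain ⟨hb, hc⟩ := h
    have hpt := hPt M A B C
    have h1 : dist B C ≤ dist B M + dist M C := dist_triangle B M C
    rw [dist_comm B M] at h1
    rw [dist_comm A C] at hpt
    have h5 : dist M B ≥ 0 := dist_nonneg
    have h6 : dist M C ≥ 0 := dist_nonneg
    have h7 : dist C A ≥ 0 := dist_nonneg
    have ha : (0:ℝ) ≤ dist B C := dist_nonneg
    have key : dist M B * (dist B C - dist C A) + dist M C * (dist B C - dist A B) ≤ 0 := by
      nlinarith [mul_nonneg ha (by linarith : (0:ℝ) ≤ dist M A - dist M B - dist M C)]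
    have hd2 : dist M B ≤ 0 := by
      by_contra h'; push_neg at h'
      nlinarith [mul_pos h' (sub_pos.mpr hb), mul_nonneg h6 (sub_nonneg.mpr hc.le)]
    have hd3 : dist M C ≤ 0 := by
      by_contra h'; push_neg at h'
      nlinarith [mul_pos h' (sub_pos.mpr hc), mul_nonneg h5 (sub_nonneg.mpr hb.le)]
    linarith
  · rintro (h | h)
    · exact ⟨C, by rw [dist_self, dist_comm C B, dist_comm C A]; linarith [dist_comm C A ▸ h]⟩
    · exact ⟨B, by rw [dist_self, dist_comm B A]; linarith⟩
end

section
/- In a metric space (X,d), a point M satisfies d2 + d3 − d1 ≤ 0 if and only if α1(M) ≤ 0 and β1(M) ≤ 0; and if (X,d) is Ptolemaic, then the set of such points M is non-empty if and only if b ≥ a or c ≥ a. -/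
/-- A point `M` satisfies `d2 + d3 − d1 ≤ 0` iff `α1(M) ≤ 0` and `β1(M) ≤ 0`;
if the space is Ptolemaic, the set of such points is non-empty iff
`b ≥ a` or `c ≥ a`. -/
theorem theorem_one {X : Type*} [MetricSpace X] (A B C : X) :
    (∀ M : X, dist M B + dist M C - dist M A ≤ 0 ↔
      (4 * (dist M B) ^ 2 * (dist M C) ^ 2 -
        ((dist M A) ^ 2 - ((dist M B) ^ 2 + (dist M C) ^ 2)) ^ 2 ≤ 0 ∧
       (dist M B) ^ 2 + (dist M C) ^ 2 - (dist M A) ^ 2 ≤ 0)) ∧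
    ((∀ x1 x2 x3 x4 : X,
        dist x1 x2 * dist x3 x4 ≤ dist x2 x4 * dist x1 x3 + dist x1 x4 * dist x2 x3) →
      ((∃ M : X, dist M B + dist M C - dist M A ≤ 0) ↔
        dist C A ≥ dist B C ∨ dist A B ≥ dist B C)) := by
  constructor
  · intro M
    have h1 : 0 ≤ dist M A := dist_nonneg
    have h2 : 0 ≤ dist M B := dist_nonneg
    have h3 : 0 ≤ dist M C := dist_nonneg
    constructor
    · intro h
      have hp : 2 * dist M B * dist M C ≤
          dist M A ^ 2 - dist M B ^ 2 - dist M C ^ 2 := by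
        nlinarith [mul_nonneg (by linarith : (0:ℝ) ≤ dist M A - dist M B - dist M C)
          (by linarith : (0:ℝ) ≤ dist M A + dist M B + dist M C)]
      constructor
      · nlinarith [hp, mul_nonneg h2 h3,
          sq_nonneg (dist M A ^ 2 - dist M B ^ 2 - dist M C ^ 2 -
            2 * dist M B * dist M C)]
      · nlinarith [hp, mul_nonneg h2 h3]
    · rintro ⟨ha, hb⟩
      by_contra hcon
      push_neg at hcon
      have h4 : dist M A ^ 2 < (dist M B + dist M C) ^ 2 := by nlinarith
      nlinarith [mul_nonneg h2 h3, ha, hb, h4]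
  · intro hP
    constructor
    · rintro ⟨M, hM⟩
      by_contra h
      push_neg at h
      obtain ⟨hb, hc⟩ := h
      have hpt := hP B C M A
      rw [dist_comm B M, dist_comm C M, dist_comm B A] at hpt
      have h2 : 0 ≤ dist M B := dist_nonneg
      have h3 : 0 ≤ dist M C := dist_nonneg
      have ha : 0 ≤ dist B C := dist_nonneg
      have hle : dist B C * (dist M B + dist M C) ≤ dist B C * dist M A :=
        mul_le_mul_of_nonneg_left (by linarith) ha
      have key : (dist B C - dist C A) * dist M B +
          (dist B C - dist A B) * dist M C ≤ 0 := by nlinarith [hle, hpt]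
      have hB0 : dist M B = 0 := le_antisymm
        (by nlinarith [mul_nonneg (by linarith : (0:ℝ) ≤ dist B C - dist A B) h3]) h2
      have hC0 : dist M C = 0 := le_antisymm
        (by nlinarith [mul_nonneg (by linarith : (0:ℝ) ≤ dist B C - dist C A) h2]) h3
      have hMB : M = B := dist_eq_zero.mp hB0
      have hMC : M = C := dist_eq_zero.mp hC0
      have hBC : B = C := hMB ▸ hMC
      have hz : dist B C = 0 := by rw [hBC, dist_self]
      have : (0:ℝ) ≤ dist C A := dist_nonneg
      linarith
    · rintro (hb | hc)
      · refine ⟨C, ?_⟩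
        rw [dist_self, dist_comm C B]
        linarith
      · refine ⟨B, ?_⟩
        rw [dist_self, dist_comm B A]
        linarith
end

section
/- In a metric space (X,d), a point M satisfies d3 + d1 − d2 ≤ 0 if and only if α1(M) ≤ 0 and β2(M) ≤ 0; and if (X,d) is Ptolemaic, then the set of such points M is non-empty if and only if c ≥ b or a ≥ b. -/
lemma aux_ptol (d1 d2 d3 : ℝ) (h1 : 0 ≤ d1) (h2 : 0 ≤ d2) (h3 : 0 ≤ d3) :
    d3 + d1 - d2 ≤ 0 ↔
      (4 * d2 ^ 2 * d3 ^ 2 - (d1 ^ 2 - (d2 ^ 2 + d3 ^ 2)) ^ 2 ≤ 0 ∧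
       d3 ^ 2 + d1 ^ 2 - d2 ^ 2 ≤ 0) := by
  constructor
  · intro h
    constructor
    · have f1 : 0 ≤ (d2+d3)^2 - d1^2 := by nlinarith [mul_nonneg h2 h3]
      have f2 : 0 ≤ (d2-d3)^2 - d1^2 := by nlinarith [mul_nonneg h1 h3]
      nlinarith [mul_nonneg f1 f2]
    · nlinarith [mul_nonneg h1 h3]
  · rintro ⟨ha, hb⟩
    have ht : 0 ≤ d2^2 - d1^2 - d3^2 := by linarith
    have h21 : d1 ≤ d2 := by nlinarith
    have key : 2*d1*d3 ≤ d2^2 - d1^2 - d3^2 := by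
      nlinarith [mul_nonneg h2 h3, mul_nonneg h1 h3, sq_nonneg (d2^2 - d1^2 - d3^2 - 2*d2*d3)]
    nlinarith [key]

/-- A point `M` satisfies `d3 + d1 − d2 ≤ 0` iff `α1(M) ≤ 0` and `β2(M) ≤ 0`;
if the space is Ptolemaic, the set of such points is non-empty iff
`c ≥ b` or `a ≥ b`. -/
theorem theorem_two {X : Type*} [MetricSpace X] (A B C : X) :
    (∀ M : X, dist M C + dist M A - dist M B ≤ 0 ↔
      (4 * (dist M B) ^ 2 * (dist M C) ^ 2 -
        ((dist M A) ^ 2 - ((dist M B) ^ 2 + (dist M C) ^ 2)) ^ 2 ≤ 0 ∧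
       (dist M C) ^ 2 + (dist M A) ^ 2 - (dist M B) ^ 2 ≤ 0)) ∧
    ((∀ x1 x2 x3 x4 : X,
        dist x1 x2 * dist x3 x4 ≤ dist x2 x4 * dist x1 x3 + dist x1 x4 * dist x2 x3) →
      ((∃ M : X, dist M C + dist M A - dist M B ≤ 0) ↔
        dist A B ≥ dist C A ∨ dist B C ≥ dist C A)) := by
  constructor
  · intro M
    exact aux_ptol (dist M A) (dist M B) (dist M C) dist_nonneg dist_nonneg dist_nonneg
  · intro hpt
    constructor
    · rintro ⟨M, hM⟩
      have hp := hpt M B A C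
      rw [dist_comm A C, dist_comm B A] at hp
      by_contra hc
      push_neg at hc
      obtain ⟨hc1, hc2⟩ := hc
      have htri : dist C A ≤ dist M C + dist M A := by
        have h := dist_triangle C M A
        rwa [dist_comm C M] at h
      have h1 : (0:ℝ) ≤ dist M A := dist_nonneg
      have h3 : (0:ℝ) ≤ dist M C := dist_nonneg
      have hca : (0:ℝ) ≤ dist C A := dist_nonneg
      have hS : (dist C A - dist B C) * dist M A + (dist C A - dist A B) * dist M C ≤ 0 := by
        nlinarith [mul_nonneg hca (by linarith : (0:ℝ) ≤ dist M B - dist M A - dist M C)]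
      have hd1 : dist M A = 0 := by
        by_contra hne
        have hpos : 0 < dist M A := lt_of_le_of_ne h1 (Ne.symm hne)
        nlinarith [mul_pos (by linarith : (0:ℝ) < dist C A - dist B C) hpos,
          mul_nonneg (by linarith : (0:ℝ) ≤ dist C A - dist A B) h3]
      have hd3 : dist M C = 0 := by
        by_contra hne
        have hpos : 0 < dist M C := lt_of_le_of_ne h3 (Ne.symm hne)
        nlinarith [mul_pos (by linarith : (0:ℝ) < dist C A - dist A B) hpos,
          mul_nonneg (by linarith : (0:ℝ) ≤ dist C A - dist B C) h1]
      have : dist C A ≤ 0 := by rw [hd1, hd3] at htri; linarith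
      linarith [dist_nonneg (x := B) (y := C)]
    · rintro (h | h)
      · refine ⟨A, ?_⟩
        rw [dist_self, dist_comm A C]
        linarith
      · refine ⟨C, ?_⟩
        rw [dist_self, dist_comm C B]
        linarith
end

section
/- In a metric space (X,d), a point M satisfies d1 + d2 − d3 ≤ 0 if and only if α1(M) ≤ 0 and β3(M) ≤ 0; and if (X,d) is Ptolemaic, then the set of such points M is non-empty if and only if a ≥ c or b ≥ c. -/
lemma aux_alg (d1 d2 d3 : ℝ) (h1 : 0 ≤ d1) (h2 : 0 ≤ d2) (h3 : 0 ≤ d3) :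
    d1 + d2 - d3 ≤ 0 ↔
      (4 * d2 ^ 2 * d3 ^ 2 - (d1 ^ 2 - (d2 ^ 2 + d3 ^ 2)) ^ 2 ≤ 0 ∧
       d1 ^ 2 + d2 ^ 2 - d3 ^ 2 ≤ 0) := by
  constructor
  · intro h
    have h' : d1 + d2 ≤ d3 := by linarith
    constructor
    · nlinarith [mul_nonneg (mul_nonneg (by linarith : (0:ℝ) ≤ d2 + d3 - d1)
        (by linarith : (0:ℝ) ≤ d2 + d3 + d1)) (by linarith : (0:ℝ) ≤ d1 - d2 + d3),
        mul_nonneg h1 h2, mul_nonneg h2 h3, mul_nonneg h1 h3]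
    · nlinarith [mul_nonneg h1 h2]
  · rintro ⟨hα, hβ⟩
    by_contra h
    push_neg at h
    have hd3d2 : d2 ≤ d3 := by nlinarith [sq_nonneg d1]
    have hd3d1 : d1 ≤ d3 := by nlinarith [sq_nonneg d2]
    have f1 : 0 ≤ d1 - d2 + d3 := by linarith
    have f2 : 0 ≤ d2 + d3 - d1 := by linarith
    have f3 : 0 < d1 + d2 + d3 := by linarith
    have f4 : 0 < d1 + d2 - d3 := by linarith
    -- α1 = (d2+d3-d1)(d2+d3+d1)(d1-d2+d3)(d1+d2-d3)
    have key : 0 < (d2 + d3 - d1) * (d1 - d2 + d3) := by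
      rcases lt_or_eq_of_le f2 with h2' | h2'
      · rcases lt_or_eq_of_le f1 with h1' | h1'
        · positivity
        · exfalso
          -- d1 - d2 + d3 = 0 with d2 ≤ d3 forces d1 = 0, d2 = d3
          have : d1 = 0 := by nlinarith
          nlinarith
      · exfalso
        -- d1 = d2 + d3, with β: need d2 = 0, then d1 = d3, contradict f4
        nlinarith
    nlinarith [mul_pos (mul_pos key f3) f4]

/-- A point `M` satisfies `d1 + d2 − d3 ≤ 0` iff `α1(M) ≤ 0` and `β3(M) ≤ 0`;
if the space is Ptolemaic, the set of such points is non-empty iff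
`a ≥ c` or `b ≥ c`. -/
theorem theorem_three {X : Type*} [MetricSpace X] (A B C : X) :
    (∀ M : X, dist M A + dist M B - dist M C ≤ 0 ↔
      (4 * (dist M B) ^ 2 * (dist M C) ^ 2 -
        ((dist M A) ^ 2 - ((dist M B) ^ 2 + (dist M C) ^ 2)) ^ 2 ≤ 0 ∧
       (dist M A) ^ 2 + (dist M B) ^ 2 - (dist M C) ^ 2 ≤ 0)) ∧
    ((∀ x1 x2 x3 x4 : X,
        dist x1 x2 * dist x3 x4 ≤ dist x2 x4 * dist x1 x3 + dist x1 x4 * dist x2 x3) →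
      ((∃ M : X, dist M A + dist M B - dist M C ≤ 0) ↔
        dist B C ≥ dist A B ∨ dist C A ≥ dist A B)) := by
  constructor
  · intro M
    exact aux_alg _ _ _ dist_nonneg dist_nonneg dist_nonneg
  · intro hPt
    constructor
    · rintro ⟨M, hM⟩
      by_contra hc
      push_neg at hc
      obtain ⟨ha, hb⟩ := hc
      have hp := hPt A B M C
      rw [dist_comm A M, dist_comm B M] at hp
      -- hp : dist A B * dist M C ≤ dist B C * dist M A + dist A C * dist M B
      have hAC : dist A C = dist C A := dist_comm A C
      have h1 : 0 ≤ dist M A := dist_nonneg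
      have h2 : 0 ≤ dist M B := dist_nonneg
      have h3 : 0 ≤ dist M C := dist_nonneg
      rcases eq_or_lt_of_le (add_nonneg h1 h2) with h12 | h12
      · -- d1 = d2 = 0, so M = A = B, so c = 0 ≤ a
        have hd1 : dist M A = 0 := by linarith
        have hd2 : dist M B = 0 := by linarith
        have hAB : A = B := by
          have := dist_eq_zero.mp hd1
          have := dist_eq_zero.mp hd2
          subst_vars; rfl
        rw [hAB] at ha
        simp at ha
        linarith [dist_nonneg (α := X) (x := B) (y := C)]
      · have hcpos : 0 < dist A B := by
          by_contra hcp
          push_neg at hcp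
          have : dist A B = 0 := le_antisymm hcp dist_nonneg
          linarith [dist_nonneg (α := X) (x := B) (y := C)]
        have pa : 0 < dist A B - dist B C := by linarith
        have pb : 0 < dist A B - dist C A := by linarith
        have hr : dist A B * (dist M A + dist M B) ≤ dist A B * dist M C :=
          mul_le_mul_of_nonneg_left (by linarith) hcpos.le
        have K : (dist A B - dist B C) * dist M A +
            (dist A B - dist C A) * dist M B ≤ 0 := by
          rw [hAC] at hp; nlinarith
        nlinarith [mul_pos (mul_pos pa pb) h12, mul_nonneg (mul_nonneg pa.le pa.le) h1,
          mul_nonneg (mul_nonneg pb.le pb.le) h2, K, pa, pb]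
    · rintro (ha | hb)
      · exact ⟨B, by rw [dist_comm B A]; simp [dist_comm B C] at ha ⊢; linarith⟩
      · exact ⟨A, by simp [dist_comm A C] at hb ⊢; linarith⟩
end

section
/- If a real normed vector space X satisfies the Ptolemaic inequality ‖x1 − x2‖·‖x3 − x4‖ ≤ ‖x2 − x4‖·‖x1 − x3‖ + ‖x1 − x4‖·‖x2 − x3‖ for all x1, x2, x3, x4 ∈ X, then its norm satisfies the parallelogram law: ‖x + y‖² + ‖x − y‖² = 2‖x‖² + 2‖y‖² for all x, y ∈ X (hence the norm is induced by an inner product). -/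
/-!
Ptolemy's inequality at `u, -u, v, -v` gives `4‖u‖‖v‖ ≤ ‖u + v‖² + ‖u - v‖²`, and at
`u + v, -(u + v), u - v, -(u - v)` it gives `‖u + v‖‖u - v‖ ≤ ‖u‖² + ‖v‖²`. Along a line
`f s = ‖x + s • e‖`, `‖e‖ = 1`, recentred so that `F σ ≥ |σ|`, the excess `H σ = F σ² - σ²` is
therefore nonnegative, bounded, and satisfies `2 H σ ≤ H (σ + F σ) + H (σ - F σ)`. As one of the
two children `σ ± F σ` always lies in `[-√M, √M]`, `M = sup H`, the supremum is attained on that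
interval, and the level set `{H = M}` is closed and stable under
`z ↦ z ± √(z² + M)`. Writing `z = √M cot x`, these two maps halve `x` modulo `π`, so the level set
is dense and `H` is constant: `‖x + s • e‖²` is a monic quadratic in `s`, which is the
parallelogram law.
-/

open Real Filter Set Topology

namespace Real

theorem cot_half_eq_cot_add_inv_sin {x : ℝ} (hx : sin x ≠ 0) :
    cot (x / 2) = cot x + 1 / sin x := by
  have hsin : sin x = 2 * sin (x / 2) * cos (x / 2) := by
    rw [← sin_two_mul, mul_div_cancel₀ x two_ne_zero]
  have hcos : cos x = 2 * cos (x / 2) ^ 2 - 1 := by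
    rw [← cos_two_mul, mul_div_cancel₀ x two_ne_zero]
  have hs : sin (x / 2) ≠ 0 := fun h => hx (by rw [hsin, h]; ring)
  have hc : cos (x / 2) ≠ 0 := fun h => hx (by rw [hsin, h]; ring)
  rw [cot_eq_cos_div_sin, cot_eq_cos_div_sin, hsin, hcos]
  field_simp
  ring

theorem cot_half_eq_add_or_sub_sqrt {x : ℝ} (hx : sin x ≠ 0) :
    cot (x / 2) = cot x + √(cot x ^ 2 + 1) ∨ cot (x / 2) = cot x - √(cot x ^ 2 + 1) := by
  have hsqrt : √(cot x ^ 2 + 1) = |1 / sin x| := by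
    rw [← sqrt_sq_eq_abs, cot_eq_cos_div_sin]
    congr 1
    field_simp
    linear_combination cos_sq_add_sin_sq x
  rw [cot_half_eq_cot_add_inv_sin hx, hsqrt]
  rcases abs_choice (1 / sin x) with h | h <;> rw [h]
  · exact Or.inl rfl
  · exact Or.inr (by ring)

theorem cot_periodic : Function.Periodic cot π := by
  rw [show cot = cos / sin from funext cot_eq_cos_div_sin]
  exact cos_antiperiodic.div sin_antiperiodic

theorem exists_cot_eq (z : ℝ) : ∃ x, sin x ≠ 0 ∧ cot x = z := by
  refine ⟨π / 2 - arctan z, ?_, ?_⟩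
  · rw [sin_pi_div_two_sub]
    exact (cos_arctan_pos z).ne'
  · rw [cot_eq_cos_div_sin, sin_pi_div_two_sub, cos_pi_div_two_sub, ← tan_eq_sin_div_cos,
      tan_arctan]

end Real

theorem tendsto_add_floor_mul_div_two_pow {p : ℝ} (hp : 0 < p) (x₀ x : ℝ) :
    Tendsto (fun n : ℕ => (x₀ + ⌊(2 ^ n * x - x₀) / p⌋ * p) / 2 ^ n) atTop (𝓝 x) := by
  have hlow : Tendsto (fun n : ℕ => x - p / 2 ^ n) atTop (𝓝 x) := by
    simpa using tendsto_const_nhds.sub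
      (tendsto_const_nhds.div_atTop (tendsto_pow_atTop_atTop_of_one_lt (one_lt_two : (1 : ℝ) < 2)))
  refine tendsto_of_tendsto_of_tendsto_of_le_of_le hlow tendsto_const_nhds (fun n => ?_)
    (fun n => ?_)
  · have h := Int.lt_floor_add_one ((2 ^ n * x - x₀) / p)
    rw [div_lt_iff₀ hp] at h
    rw [sub_le_iff_le_add, ← add_div, le_div_iff₀ (by positivity)]
    nlinarith
  · have h := Int.floor_le ((2 ^ n * x - x₀) / p)
    rw [le_div_iff₀ hp] at h
    rw [div_le_iff₀ (by positivity)]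
    linarith

/-- In the coordinate `z = cot x`, the maps `z ↦ z ± √(z ^ 2 + 1)` send `x` to its two halves
modulo `π`, so `Z` contains the cotangents of the dense set of all `(x₀ + k π) / 2 ^ n`. -/
theorem eq_univ_of_forall_add_sqrt_mem {Z : Set ℝ} (hZ : IsClosed Z) (hne : Z.Nonempty)
    (hstep : ∀ z ∈ Z, z + √(z ^ 2 + 1) ∈ Z ∧ z - √(z ^ 2 + 1) ∈ Z) : Z = univ := by
  obtain ⟨z₀, hz₀⟩ := hne
  obtain ⟨x₀, hx₀, hcot₀⟩ := exists_cot_eq z₀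
  have hsin : ∀ (n : ℕ) (k : ℤ), sin ((x₀ + k * π) / 2 ^ n) ≠ 0 := by
    intro n k h
    obtain ⟨j, hj⟩ := sin_eq_zero_iff.mp h
    apply hx₀
    rw [show x₀ = ((2 ^ n * j - k : ℤ) : ℝ) * π by
      push_cast
      field_simp at hj
      linarith]
    exact sin_int_mul_pi _
  have hdyadic : ∀ (n : ℕ) (k : ℤ), cot ((x₀ + k * π) / 2 ^ n) ∈ Z := by
    intro n
    induction n with
    | zero =>
      intro k
      simpa [cot_periodic.int_mul k x₀, hcot₀] using hz₀
    | succ n ih =>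
      intro k
      rw [pow_succ, ← div_div]
      rcases cot_half_eq_add_or_sub_sqrt (hsin n k) with h | h <;> rw [h]
      exacts [(hstep _ (ih k)).1, (hstep _ (ih k)).2]
  refine eq_univ_of_forall fun z => ?_
  obtain ⟨x, hx, rfl⟩ := exists_cot_eq z
  have hcont : ContinuousAt cot x := by
    rw [show cot = cos / sin from funext cot_eq_cos_div_sin]
    exact continuous_cos.continuousAt.div continuous_sin.continuousAt hx
  exact hZ.mem_of_tendsto (hcont.tendsto.comp (tendsto_add_floor_mul_div_two_pow pi_pos x₀ x))
    (Eventually.of_forall fun n => hdyadic n _)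

theorem eq_univ_of_forall_add_sqrt_add_mem {a : ℝ} (ha : 0 < a) {Z : Set ℝ} (hZ : IsClosed Z)
    (hne : Z.Nonempty) (hstep : ∀ z ∈ Z, z + √(z ^ 2 + a) ∈ Z ∧ z - √(z ^ 2 + a) ∈ Z) :
    Z = univ := by
  have hsqrt : 0 < √a := sqrt_pos.mpr ha
  have hscaled : (fun w => √a * w) ⁻¹' Z = univ := by
    refine eq_univ_of_forall_add_sqrt_mem (hZ.preimage (continuous_const_mul _))
      ⟨hne.some / √a, by simpa [mul_div_cancel₀ _ hsqrt.ne'] using hne.some_mem⟩ fun w hw => ?_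
    have h : √((√a * w) ^ 2 + a) = √a * √(w ^ 2 + 1) := by
      rw [← sqrt_mul ha.le, mul_pow, sq_sqrt ha.le]
      ring_nf
    simpa only [mem_preimage, mul_add, mul_sub, h] using hstep _ hw
  refine eq_univ_of_forall fun z => ?_
  simpa [mul_div_cancel₀ _ hsqrt.ne'] using eq_univ_iff_forall.mp hscaled (z / √a)

def sqExcess (F : ℝ → ℝ) (σ : ℝ) : ℝ := F σ ^ 2 - σ ^ 2

section sqExcess

variable {F : ℝ → ℝ}

theorem continuous_sqExcess (hc : Continuous F) : Continuous (sqExcess F) :=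
  (hc.pow 2).sub (continuous_pow 2)

theorem sqExcess_nonneg (habs : ∀ σ, |σ| ≤ F σ) (σ : ℝ) : 0 ≤ sqExcess F σ :=
  sub_nonneg.mpr (sq_abs σ ▸ pow_le_pow_left₀ (abs_nonneg σ) (habs σ) 2)

theorem two_mul_sqExcess_le (habs : ∀ σ, |σ| ≤ F σ)
    (hsum : ∀ σ t, 4 * (|t| * F σ) ≤ F (σ + t) ^ 2 + F (σ - t) ^ 2) (σ : ℝ) :
    2 * sqExcess F σ ≤ sqExcess F (σ + F σ) + sqExcess F (σ - F σ) := by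
  have h := hsum σ (F σ)
  rw [abs_of_nonneg ((abs_nonneg σ).trans (habs σ))] at h
  unfold sqExcess
  linear_combination h

theorem sqExcess_mul_sq_le (habs : ∀ σ, |σ| ≤ F σ)
    (hprod : ∀ σ t, F (σ + t) * F (σ - t) ≤ F σ ^ 2 + t ^ 2) (σ : ℝ) :
    sqExcess F σ * σ ^ 2 ≤ 2 * F 0 ^ 2 * σ ^ 2 + F 0 ^ 4 := by
  have hF : 0 ≤ F σ := (abs_nonneg σ).trans (habs σ)
  have h : F σ * |σ| ≤ F 0 ^ 2 + σ ^ 2 :=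
    calc F σ * |σ| ≤ F σ * F (-σ) := mul_le_mul_of_nonneg_left (abs_neg σ ▸ habs (-σ)) hF
      _ ≤ F 0 ^ 2 + σ ^ 2 := by simpa using hprod 0 σ
  have hsq := pow_le_pow_left₀ (by positivity) h 2
  rw [mul_pow, sq_abs] at hsq
  unfold sqExcess
  linear_combination hsq

theorem bddAbove_range_sqExcess (hc : Continuous F) (habs : ∀ σ, |σ| ≤ F σ)
    (hprod : ∀ σ t, F (σ + t) * F (σ - t) ≤ F σ ^ 2 + t ^ 2) : BddAbove (range (sqExcess F)) := by
  obtain ⟨B, hB⟩ := isCompact_Icc.bddAbove_image (K := Icc (-1 : ℝ) 1)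
    (continuous_sqExcess hc).continuousOn
  refine ⟨max B (2 * F 0 ^ 2 + F 0 ^ 4), forall_mem_range.mpr fun σ => ?_⟩
  rcases le_or_gt |σ| 1 with hσ | hσ
  · exact le_max_of_le_left (hB (mem_image_of_mem _ (abs_le.mp hσ)))
  · have h1 : 1 ≤ σ ^ 2 := by nlinarith [sq_abs σ]
    have h := sqExcess_mul_sq_le habs hprod σ
    refine le_max_of_le_right (le_of_mul_le_mul_right ?_ (by linarith : (0 : ℝ) < σ ^ 2))
    nlinarith [mul_nonneg (sq_nonneg (F 0 ^ 2)) (sub_nonneg.mpr h1)]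

theorem exists_mem_Icc_two_mul_sqExcess_sub_le (habs : ∀ σ, |σ| ≤ F σ)
    (hsum : ∀ σ t, 4 * (|t| * F σ) ≤ F (σ + t) ^ 2 + F (σ - t) ^ 2) {M : ℝ}
    (hM : ∀ σ, sqExcess F σ ≤ M) (τ : ℝ) :
    ∃ τ' ∈ Icc (-√M) √M, 2 * sqExcess F τ - M ≤ sqExcess F τ' := by
  have hτ := habs τ
  have hF : F τ ≤ |τ| + √M := by
    have hH := hM τ
    unfold sqExcess at hH
    rw [← sub_le_iff_le_add', le_sqrt (by linarith) ((sqExcess_nonneg habs τ).trans (hM τ))]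
    nlinarith [sq_abs τ, abs_nonneg τ]
  have hchild := two_mul_sqExcess_le habs hsum τ
  have hsqrt := sqrt_nonneg M
  rcases le_or_gt 0 τ with hτ0 | hτ0
  · rw [abs_of_nonneg hτ0] at hτ hF
    exact ⟨τ - F τ, ⟨by linarith, by linarith⟩, by linarith [hM (τ + F τ)]⟩
  · rw [abs_of_neg hτ0] at hτ hF
    exact ⟨τ + F τ, ⟨by linarith, by linarith⟩, by linarith [hM (τ - F τ)]⟩

theorem exists_forall_sqExcess_le (hc : Continuous F) (habs : ∀ σ, |σ| ≤ F σ)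
    (hsum : ∀ σ t, 4 * (|t| * F σ) ≤ F (σ + t) ^ 2 + F (σ - t) ^ 2)
    (hprod : ∀ σ t, F (σ + t) * F (σ - t) ≤ F σ ^ 2 + t ^ 2) :
    ∃ σ₀, ∀ σ, sqExcess F σ ≤ sqExcess F σ₀ := by
  set M := ⨆ σ, sqExcess F σ
  have hM : ∀ σ, sqExcess F σ ≤ M := le_ciSup (bddAbove_range_sqExcess hc habs hprod)
  obtain ⟨σ₀, -, hσ₀⟩ := isCompact_Icc.exists_isMaxOn
    (nonempty_Icc.mpr (neg_le_self (sqrt_nonneg M))) (continuous_sqExcess hc).continuousOn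
  refine ⟨σ₀, fun σ => (hM σ).trans ?_⟩
  have h : M ≤ (sqExcess F σ₀ + M) / 2 := ciSup_le fun τ => by
    obtain ⟨τ', hτ', h⟩ := exists_mem_Icc_two_mul_sqExcess_sub_le habs hsum hM τ
    linarith [isMaxOn_iff.mp hσ₀ τ' hτ']
  linarith

theorem exists_sq_eq_sq_add_of_abs_le (hc : Continuous F) (habs : ∀ σ, |σ| ≤ F σ)
    (hsum : ∀ σ t, 4 * (|t| * F σ) ≤ F (σ + t) ^ 2 + F (σ - t) ^ 2)
    (hprod : ∀ σ t, F (σ + t) * F (σ - t) ≤ F σ ^ 2 + t ^ 2) :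
    ∃ m, ∀ σ, F σ ^ 2 = σ ^ 2 + m := by
  obtain ⟨σ₀, hmax⟩ := exists_forall_sqExcess_le hc habs hsum hprod
  set M := sqExcess F σ₀
  suffices h : ∀ σ, sqExcess F σ = M from ⟨M, fun σ => by rw [← h σ, sqExcess]; ring⟩
  rcases (sqExcess_nonneg habs σ₀).eq_or_lt with hM | hM
  · exact fun σ => le_antisymm (hmax σ) (hM.symm.trans_le (sqExcess_nonneg habs σ))
  have hZ : {σ | sqExcess F σ = M} = univ := by
    refine eq_univ_of_forall_add_sqrt_add_mem hM (isClosed_eq (continuous_sqExcess hc)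
      continuous_const) ⟨σ₀, rfl⟩ fun z (hz : sqExcess F z = M) => ?_
    have hFz : F z = √(z ^ 2 + M) := by
      rw [← hz, sqExcess, add_sub_cancel, sqrt_sq ((abs_nonneg z).trans (habs z))]
    have h := two_mul_sqExcess_le habs hsum z
    rw [← hFz]
    constructor <;> show sqExcess F _ = M <;> linarith [hmax (z + F z), hmax (z - F z)]
  exact eq_univ_iff_forall.mp hZ

end sqExcess

section Recentre

variable {f : ℝ → ℝ}

theorem exists_abs_sub_le (htri : ∀ s t, |s - t| ≤ f s + f t) : ∃ c, ∀ s, |s - c| ≤ f s := by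
  have hbdd : BddAbove (range fun t => t - f t) :=
    ⟨f 0, forall_mem_range.mpr fun t => by linarith [le_abs_self t, sub_zero t ▸ htri t 0]⟩
  refine ⟨⨆ t, t - f t, fun s => abs_sub_le_iff.mpr ⟨?_, ?_⟩⟩
  · linarith [le_ciSup hbdd s]
  · have h : ⨆ t, t - f t ≤ s + f s :=
      ciSup_le fun t => by linarith [le_abs_self (t - s), htri t s]
    linarith

theorem exists_sq_eq_sub_sq_add (hc : Continuous f) (htri : ∀ s t, |s - t| ≤ f s + f t)
    (hsum : ∀ s t, 4 * (|t| * f s) ≤ f (s + t) ^ 2 + f (s - t) ^ 2)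
    (hprod : ∀ s t, f (s + t) * f (s - t) ≤ f s ^ 2 + t ^ 2) :
    ∃ c m, ∀ s, f s ^ 2 = (s - c) ^ 2 + m := by
  obtain ⟨c, hcabs⟩ := exists_abs_sub_le htri
  obtain ⟨m, hm⟩ := exists_sq_eq_sq_add_of_abs_le (F := fun σ => f (σ + c))
    (hc.comp (continuous_add_const c))
    (fun σ => by simpa using hcabs (σ + c))
    (fun σ t => by simpa only [add_right_comm, add_sub_right_comm] using hsum (σ + c) t)
    (fun σ t => by simpa only [add_right_comm, add_sub_right_comm] using hprod (σ + c) t)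
  exact ⟨c, m, fun s => by simpa using hm (s - c)⟩

end Recentre

def IsPtolemaic (X : Type*) [SeminormedAddCommGroup X] : Prop :=
  ∀ x₁ x₂ x₃ x₄ : X, ‖x₁ - x₂‖ * ‖x₃ - x₄‖ ≤ ‖x₂ - x₄‖ * ‖x₁ - x₃‖ + ‖x₁ - x₄‖ * ‖x₂ - x₃‖

namespace IsPtolemaic

variable {X : Type*} [SeminormedAddCommGroup X] [NormedSpace ℝ X]

theorem four_mul_norm_mul_norm_le (hX : IsPtolemaic X) (u v : X) :
    4 * (‖u‖ * ‖v‖) ≤ ‖u + v‖ ^ 2 + ‖u - v‖ ^ 2 := by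
  have h := hX u (-u) v (-v)
  simp only [sub_neg_eq_add, ← two_smul ℝ, norm_smul, Real.norm_two, neg_add_eq_sub,
    norm_sub_rev v u, ← neg_add', norm_neg] at h
  linear_combination h

theorem norm_add_mul_norm_sub_le (hX : IsPtolemaic X) (u v : X) :
    ‖u + v‖ * ‖u - v‖ ≤ ‖u‖ ^ 2 + ‖v‖ ^ 2 := by
  have h := hX.four_mul_norm_mul_norm_le (u + v) (u - v)
  rw [add_add_sub_cancel, add_sub_sub_cancel, ← two_smul ℝ u, ← two_smul ℝ v, norm_smul,
    norm_smul, Real.norm_two] at h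
  linear_combination h / 4

theorem exists_norm_add_smul_sq_eq (hX : IsPtolemaic X) (x : X) {e : X} (he : ‖e‖ = 1) :
    ∃ c m, ∀ s : ℝ, ‖x + s • e‖ ^ 2 = (s - c) ^ 2 + m := by
  have hadd : ∀ s t : ℝ, x + s • e + t • e = x + (s + t) • e := fun s t => by
    rw [add_smul, add_assoc]
  have hsub : ∀ s t : ℝ, x + s • e - t • e = x + (s - t) • e := fun s t => by
    rw [sub_smul, add_sub_assoc]
  have hnorm : ∀ t : ℝ, ‖t • e‖ = |t| := fun t => by rw [norm_smul, he, mul_one, Real.norm_eq_abs]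
  refine exists_sq_eq_sub_sq_add (by fun_prop) (fun s t => ?_) (fun s t => ?_) (fun s t => ?_)
  · have h := norm_sub_le (x + s • e) (x + t • e)
    rwa [add_sub_add_left_eq_sub, ← sub_smul, hnorm] at h
  · simpa only [hadd, hsub, hnorm, mul_comm |t|] using
      hX.four_mul_norm_mul_norm_le (x + s • e) (t • e)
  · simpa only [hadd, hsub, hnorm, sq_abs] using
      hX.norm_add_mul_norm_sub_le (x + s • e) (t • e)

end IsPtolemaic

/-- If a real normed space satisfies the Ptolemaic inequality, then its norm
satisfies the parallelogram law (hence comes from an inner product). -/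
theorem ptolemaic_normed_space_parallelogram {X : Type*}
    [NormedAddCommGroup X] [NormedSpace ℝ X]
    (hPt : ∀ x1 x2 x3 x4 : X,
      ‖x1 - x2‖ * ‖x3 - x4‖ ≤ ‖x2 - x4‖ * ‖x1 - x3‖ + ‖x1 - x4‖ * ‖x2 - x3‖) :
    ∀ x y : X, ‖x + y‖ ^ 2 + ‖x - y‖ ^ 2 = 2 * ‖x‖ ^ 2 + 2 * ‖y‖ ^ 2 := by
  intro x y
  rcases eq_or_ne y 0 with rfl | hy
  · simp only [add_zero, sub_zero, norm_zero]
    ring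
  have hy' : ‖y‖ ≠ 0 := norm_ne_zero_iff.mpr hy
  have he : ‖‖y‖⁻¹ • y‖ = 1 := by rw [norm_smul, norm_inv, norm_norm, inv_mul_cancel₀ hy']
  obtain ⟨c, m, h⟩ := IsPtolemaic.exists_norm_add_smul_sq_eq hPt x he
  have hplus := h ‖y‖
  have hminus := h (-‖y‖)
  have hzero := h 0
  rw [smul_inv_smul₀ hy'] at hplus
  rw [neg_smul, smul_inv_smul₀ hy', ← sub_eq_add_neg] at hminus
  rw [zero_smul, add_zero] at hzero
  linear_combination hplus + hminus - 2 * hzero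
end

section
/- Let ABC be an equilateral triangle in the Euclidean plane with circumcenter O = (A + B + C)/3 and circumradius R = d(O,A). A point M of the plane yields a degenerative triangle from the distances d1 = d(M,A), d2 = d(M,B), d3 = d(M,C) — i.e., d1 + d2 = d3 or d2 + d3 = d1 or d3 + d1 = d2 — if and only if M lies on the circumcircle, i.e., d(M,O) = R. -/
/-!
Write `a, b, c` for the distances from `M` to the vertices. The three lengths are degenerate exactly
when the Heron product `(a + b + c)(-a + b + c)(a - b + c)(a + b - c)` vanishes. With
`u, v, w = A - O, B - O, C - O` and `m = M - O`, the squares `a², b², c²` are `‖m‖² + R² - 2⟪m, u⟫`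
and so on, and `⟪m, u⟫ + ⟪m, v⟫ + ⟪m, w⟫ = 0`; since `u, v, w` form a tight frame of the plane,
`⟪m, u⟫² + ⟪m, v⟫² + ⟪m, w⟫² = (3/2) R² ‖m‖²`. Substituting, the Heron product becomes
`3 (‖m‖² - R²)²`, which vanishes exactly on the circumcircle.
-/

open RealInnerProductSpace

/-- Sixteen times the squared area of a triangle with side lengths `a, b, c` (Heron's formula). -/
def heronProduct (a b c : ℝ) : ℝ := (a + b + c) * (-a + b + c) * (a - b + c) * (a + b - c)

theorem heronProduct_eq_zero_iff {a b c : ℝ} (ha : 0 ≤ a) (hb : 0 ≤ b) (hc : 0 ≤ c) :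
    heronProduct a b c = 0 ↔ a + b = c ∨ b + c = a ∨ c + a = b := by
  simp only [heronProduct, mul_eq_zero]
  constructor
  · rintro (((h | h) | h) | h)
    · left; linarith
    · right; left; linarith
    · right; right; linarith
    · left; linarith
  · rintro (h | h | h)
    · right; linarith
    · left; left; right; linarith
    · left; right; linarith

theorem heronProduct_eq_sq_sub (a b c : ℝ) :
    heronProduct a b c =
      (a ^ 2 + b ^ 2 + c ^ 2) ^ 2 - 2 * ((a ^ 2) ^ 2 + (b ^ 2) ^ 2 + (c ^ 2) ^ 2) := by
  unfold heronProduct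
  ring

theorem norm_eq_of_add_add_eq_zero_of_norm_sub_eq {V : Type*} [NormedAddCommGroup V]
    [InnerProductSpace ℝ V] {u v w : V} (hsum : u + v + w = 0)
    (h₁ : ‖u - v‖ = ‖v - w‖) (h₂ : ‖v - w‖ = ‖w - u‖) : ‖v‖ = ‖u‖ ∧ ‖w‖ = ‖u‖ := by
  have huv := parallelogram_law_with_norm ℝ u v
  have hvw := parallelogram_law_with_norm ℝ v w
  have hwu := parallelogram_law_with_norm ℝ w u
  rw [show u + v = -w by linear_combination (norm := module) hsum, norm_neg, h₁, h₂] at huv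
  rw [show v + w = -u by linear_combination (norm := module) hsum, norm_neg, h₂] at hvw
  rw [show w + u = -v by linear_combination (norm := module) hsum, norm_neg] at hwu
  constructor <;> refine (sq_eq_sq₀ (norm_nonneg _) (norm_nonneg _)).1 ?_ <;> linarith

namespace EuclideanSpace

/-- The Gram determinant of `u, v, m` vanishes in the plane. -/
theorem norm_sq_mul_gram_eq (u v m : EuclideanSpace ℝ (Fin 2)) :
    ‖m‖ ^ 2 * (‖u‖ ^ 2 * ‖v‖ ^ 2 - ⟪u, v⟫ ^ 2) =
      ‖v‖ ^ 2 * ⟪m, u⟫ ^ 2 - 2 * ⟪u, v⟫ * ⟪m, u⟫ * ⟪m, v⟫ + ‖u‖ ^ 2 * ⟪m, v⟫ ^ 2 := by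
  simp only [real_norm_sq_eq, inner_eq_star_dotProduct, dotProduct, Fin.sum_univ_two,
    Pi.star_apply, star_trivial]
  ring

/-- Three vectors of equal length summing to zero form a tight frame of the plane. -/
theorem sum_inner_sq_eq_of_add_add_eq_zero {u v w : EuclideanSpace ℝ (Fin 2)}
    (hsum : u + v + w = 0) (hv : ‖v‖ = ‖u‖) (hw : ‖w‖ = ‖u‖) (m : EuclideanSpace ℝ (Fin 2)) :
    ⟪m, u⟫ ^ 2 + ⟪m, v⟫ ^ 2 + ⟪m, w⟫ ^ 2 = 3 / 2 * ‖u‖ ^ 2 * ‖m‖ ^ 2 := by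
  obtain rfl : w = -(u + v) := by linear_combination (norm := module) hsum
  rcases eq_or_ne ‖u‖ 0 with hu | hu
  · rw [hu, norm_eq_zero] at hv
    rw [norm_eq_zero.1 hu, hv]
    simp
  have huv : ⟪u, v⟫ = -‖u‖ ^ 2 / 2 := by
    rw [norm_neg, ← sq_eq_sq₀ (norm_nonneg _) (norm_nonneg _), norm_add_sq_real, hv] at hw
    linarith
  have hgram := norm_sq_mul_gram_eq u v m
  rw [hv, huv] at hgram
  refine mul_left_cancel₀ (pow_ne_zero 2 hu) ?_
  rw [inner_neg_right, inner_add_right]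
  linear_combination (-2) * hgram

end EuclideanSpace

theorem heronProduct_dist_eq_of_equilateral {A B C O : EuclideanSpace ℝ (Fin 2)}
    (hO : (3 : ℝ)⁻¹ • (A + B + C) = O) (h₁ : dist A B = dist B C) (h₂ : dist B C = dist C A)
    (M : EuclideanSpace ℝ (Fin 2)) :
    heronProduct (dist M A) (dist M B) (dist M C) = 3 * (dist M O ^ 2 - dist O A ^ 2) ^ 2 := by
  obtain ⟨u, rfl⟩ : ∃ u, A = u + O := ⟨A - O, by abel⟩
  obtain ⟨v, rfl⟩ : ∃ v, B = v + O := ⟨B - O, by abel⟩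
  obtain ⟨w, rfl⟩ : ∃ w, C = w + O := ⟨C - O, by abel⟩
  obtain ⟨m, rfl⟩ : ∃ m, M = m + O := ⟨M - O, by abel⟩
  have hsum : u + v + w = 0 := by linear_combination (norm := module) (3 : ℝ) • hO
  simp only [dist_eq_norm, add_sub_add_right_eq_sub, add_sub_cancel_right, sub_add_cancel_right,
    norm_neg] at h₁ h₂ ⊢
  obtain ⟨hv, hw⟩ := norm_eq_of_add_add_eq_zero_of_norm_sub_eq hsum h₁ h₂
  have hframe := EuclideanSpace.sum_inner_sq_eq_of_add_add_eq_zero hsum hv hw m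
  have hinner : ⟪m, u⟫ + ⟪m, v⟫ + ⟪m, w⟫ = 0 := by
    rw [← inner_add_right, ← inner_add_right, hsum, inner_zero_right]
  rw [heronProduct_eq_sq_sub, norm_sub_sq_real, norm_sub_sq_real, norm_sub_sq_real, hv, hw]
  linear_combination (-8) * hframe + 4 * (⟪m, u⟫ + ⟪m, v⟫ + ⟪m, w⟫ - ‖m‖ ^ 2 - ‖u‖ ^ 2) * hinner

theorem degenerate_iff_on_circumcircle_general (A B C M : EuclideanSpace ℝ (Fin 2))
    (h1 : dist A B = dist B C) (h2 : dist B C = dist C A) :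
    (dist M A + dist M B = dist M C ∨
     dist M B + dist M C = dist M A ∨
     dist M C + dist M A = dist M B) ↔
    dist M ((3 : ℝ)⁻¹ • (A + B + C)) = dist ((3 : ℝ)⁻¹ • (A + B + C)) A := by
  rw [← heronProduct_eq_zero_iff dist_nonneg dist_nonneg dist_nonneg,
    heronProduct_dist_eq_of_equilateral rfl h1 h2]
  simp [sub_eq_zero, sq_eq_sq₀ dist_nonneg dist_nonneg]

/-- For an equilateral triangle `ABC` in the Euclidean plane with circumcenter
`O = (A + B + C)/3` and circumradius `R = d(O,A)`, the distances
`d1 = d(M,A)`, `d2 = d(M,B)`, `d3 = d(M,C)` form a degenerative triangle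
(some triangle inequality is an equality) iff `M` lies on the circumcircle. -/
theorem degenerate_iff_on_circumcircle (A B C M : EuclideanSpace ℝ (Fin 2))
    (h1 : dist A B = dist B C) (h2 : dist B C = dist C A) (h3 : 0 < dist A B) :
    (dist M A + dist M B = dist M C ∨
     dist M B + dist M C = dist M A ∨
     dist M C + dist M A = dist M B) ↔
    dist M ((3 : ℝ)⁻¹ • (A + B + C)) = dist ((3 : ℝ)⁻¹ • (A + B + C)) A :=
  degenerate_iff_on_circumcircle_general A B C M h1 h2
end
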